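/- arXiv:math/0605273 — 6 statements merged into one kernel-verified Lean document; each statement's English description precedes it below -/
import Mathlib

section
/- A symmetric probability measure σ on a locally compact group L satisfies σ * σ = σ (convolution) if and only if σ is the normalized Haar measure of a compact subgroup K of L. -/
/-!
Let `S` be the support of `μ`. If `μ ∗ μ = μ` then `S * S ⊆ S`, and symmetry gives `S⁻¹ = S`, so
`S` is a closed subgroup of full measure. For `f ∈ C_c(G, ℝ≥0)` the average
`F x = ∫ f (x * y) dμ(y)` is continuous, vanishes at infinity, and `μ ∗ μ = μ` gives it the mean
value property `F x = ∫ F (x * y) dμ(y)`. At a point `x₀ ∈ S` where `F` is maximal on `S` this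
forces `F (x₀ * y) = F x₀` for `y ∈ S`, so `F` is constant on `x₀ S = S`; comparing `F k` with
`F 1` shows that left translation by `k ∈ S` preserves `μ`. If `C` is compact with `μ C > 1/2`,
then `k⁻¹ C` meets `C` for every `k ∈ S`, so `S ⊆ C C⁻¹` is compact.
Conversely, a measure carried by `K` and invariant under left translation by `K` reproduces
itself under convolution.
-/

open MeasureTheory Measure Topology Filter Set
open scoped Pointwise ENNReal

instance Filter.isCountablyGenerated_cocompact {X : Type*} [TopologicalSpace X]
    [WeaklyLocallyCompactSpace X] [SigmaCompactSpace X] : (cocompact X).IsCountablyGenerated :=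
  let K := CompactExhaustion.choice X
  (hasBasis_cocompact.to_hasBasis
    (fun _ hs => (K.exists_superset_of_isCompact hs).imp fun _ hn =>
      ⟨trivial, compl_subset_compl.2 hn⟩)
    fun n _ => ⟨K n, K.isCompact n, subset_rfl⟩).isCountablyGenerated

theorem Continuous.exists_isMaxOn_of_tendsto_cocompact_zero {X : Type*} [TopologicalSpace X]
    {F : X → ℝ} {s : Set X} (hF : Continuous F) (hlim : Tendsto F (cocompact X) (𝓝 0))
    (hs : IsClosed s) (hne : s.Nonempty) (hnonneg : ∀ x ∈ s, 0 ≤ F x) :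
    ∃ x ∈ s, IsMaxOn F s x := by
  by_cases hpos : ∃ x₀ ∈ s, 0 < F x₀
  · obtain ⟨x₀, hx₀, hF₀⟩ := hpos
    exact hF.continuousOn.exists_isMaxOn' hs hx₀
      ((hlim.eventually (eventually_le_nhds hF₀)).filter_mono inf_le_left)
  · simp only [not_exists, not_and, not_lt] at hpos
    obtain ⟨x₀, hx₀⟩ := hne
    exact ⟨x₀, hx₀, fun x hx => (hpos x hx).trans (hnonneg x₀ hx₀)⟩

theorem Continuous.eqOn_support_of_ae_le_of_integral_eq {X : Type*} [TopologicalSpace X]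
    [MeasurableSpace X] {μ : Measure X} [IsProbabilityMeasure μ] {g : X → ℝ} {c : ℝ}
    (hg : Continuous g) (hint : Integrable g μ) (hle : ∀ᵐ x ∂μ, g x ≤ c)
    (heq : ∫ x, g x ∂μ = c) : EqOn g (fun _ => c) μ.support := by
  have hgap : ∫ x, (c - g x) ∂μ = 0 := by
    rw [integral_sub (integrable_const c) hint, heq, integral_const, probReal_univ, one_smul,
      sub_self]
  have hae : (fun x => c - g x) =ᵐ[μ] 0 :=
    (integral_eq_zero_iff_of_nonneg_ae (hle.mono fun x hx => sub_nonneg.2 hx)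
      ((integrable_const c).sub hint)).1 hgap
  refine support_subset_of_isClosed (isClosed_eq hg continuous_const) ?_
  filter_upwards [hae] with x hx using (sub_eq_zero.1 hx).symm

namespace MeasureTheory.Measure

theorem mconv_eq_of_ae_map_mul_left_eq {M : Type*} [Monoid M] [MeasurableSpace M]
    [MeasurableMul₂ M] {μ ν : Measure M} [IsProbabilityMeasure μ] [SFinite ν]
    (h : ∀ᵐ x ∂μ, ν.map (x * ·) = ν) : μ ∗ₘ ν = ν := by
  ext s hs
  have htrans : ∀ᵐ x ∂μ, ν ((x * ·) ⁻¹' s) = ν s := by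
    filter_upwards [h] with x hx
    rw [← map_apply (measurable_const_mul x) hs, hx]
  rw [mconv, map_apply measurable_mul hs, prod_apply (measurable_mul hs)]
  simp only [preimage_preimage]
  rw [lintegral_congr_ae htrans, lintegral_const, measure_univ, mul_one]

theorem mul_mem_support_mconv {M : Type*} [Monoid M] [TopologicalSpace M] [ContinuousMul M]
    [MeasurableSpace M] [MeasurableMul₂ M] {μ ν : Measure M} [SFinite ν] {x y : M}
    (hx : x ∈ μ.support) (hy : y ∈ ν.support) : x * y ∈ (μ ∗ₘ ν).support := by
  rw [mem_support_iff_forall] at hx hy ⊢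
  intro W hW
  obtain ⟨U, hU, V, hV, hUV⟩ := mem_nhds_prod_iff.1 (continuous_mul.continuousAt hW)
  calc 0 < μ U * ν V := ENNReal.mul_pos (hx U hU).ne' (hy V hV).ne'
    _ = μ.prod ν (U ×ˢ V) := (prod_prod U V).symm
    _ ≤ μ.prod ν ((fun p : M × M => p.1 * p.2) ⁻¹' W) := measure_mono hUV
    _ ≤ (μ ∗ₘ ν) W := le_map_apply measurable_mul.aemeasurable W

theorem mem_mul_inv_of_map_mul_left_eq {G : Type*} [Group G] [MeasurableSpace G]
    [MeasurableMul G] {μ : Measure G} [IsProbabilityMeasure μ] {C : Set G}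
    (hC : MeasurableSet C) (hCμ : 1 < μ C + μ C) {k : G} (hk : μ.map (k * ·) = μ) :
    k ∈ C * C⁻¹ := by
  have htrans : μ ((k * ·) ⁻¹' C) = μ C := by
    rw [← map_apply (measurable_const_mul k) hC, hk]
  obtain ⟨y, hky, hy⟩ := nonempty_inter_of_measure_lt_add μ (s := (k * ·) ⁻¹' C) hC
    (subset_univ _) (subset_univ _) (by rwa [measure_univ, htrans])
  simpa only [mul_inv_cancel_right] using
    mul_mem_mul (show k * y ∈ C from hky) (inv_mem_inv.2 hy)

section Group

variable {G : Type*} [Group G] [TopologicalSpace G] [IsTopologicalGroup G] [MeasurableSpace G]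
  [BorelSpace G] {μ : Measure G}

theorem inv_mem_support [μ.IsInvInvariant] {x : G} (hx : x ∈ μ.support) :
    x⁻¹ ∈ μ.support := by
  rw [mem_support_iff_forall] at hx ⊢
  intro U hU
  rw [← measure_inv]
  exact hx _ (continuous_inv.continuousAt.preimage_mem_nhds (by simpa using hU))

variable {f : G → ℝ} {C : ℝ}

theorem integrable_comp_mul_left [IsFiniteMeasure μ] (hf : Continuous f)
    (hC : ∀ x, ‖f x‖ ≤ C) (x : G) : Integrable (fun y => f (x * y)) μ :=
  .of_bound (hf.comp (continuous_const_mul x)).aestronglyMeasurable C (ae_of_all _ fun _ => hC _)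

theorem continuous_integral_comp_mul_left [FirstCountableTopology G] [IsFiniteMeasure μ]
    (hf : Continuous f) (hC : ∀ x, ‖f x‖ ≤ C) : Continuous fun x => ∫ y, f (x * y) ∂μ :=
  continuous_of_dominated (fun x => (integrable_comp_mul_left hf hC x).aestronglyMeasurable)
    (fun _ => ae_of_all _ fun _ => hC _) (integrable_const C)
    (ae_of_all _ fun y => hf.comp (continuous_mul_const y))

theorem tendsto_integral_comp_mul_left_cocompact [LocallyCompactSpace G] [SigmaCompactSpace G]
    [IsFiniteMeasure μ] (hf : Continuous f) (hfc : HasCompactSupport f) :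
    Tendsto (fun x => ∫ y, f (x * y) ∂μ) (cocompact G) (𝓝 0) := by
  obtain ⟨C, hC⟩ := hf.bounded_above_of_compact_support hfc
  simpa using tendsto_integral_filter_of_dominated_convergence (fun _ => C)
    (.of_forall fun x => (integrable_comp_mul_left hf hC x).aestronglyMeasurable)
    (.of_forall fun _ => ae_of_all _ fun _ => hC _) (integrable_const C)
    (ae_of_all _ fun y =>
      hfc.is_zero_at_infty.comp (tendsto_cocompact_mul_right (mul_inv_cancel y)))

variable [SecondCountableTopology G]

theorem one_mem_support_of_mconv_self [IsProbabilityMeasure μ] [μ.IsInvInvariant]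
    (h : μ ∗ₘ μ = μ) : (1 : G) ∈ μ.support := by
  obtain ⟨x, hx⟩ := nonempty_support (IsProbabilityMeasure.ne_zero μ)
  simpa [h] using mul_mem_support_mconv hx (inv_mem_support hx)

def supportSubgroup (μ : Measure G) [IsProbabilityMeasure μ] [μ.IsInvInvariant]
    (h : μ ∗ₘ μ = μ) : Subgroup G where
  carrier := μ.support
  mul_mem' hx hy := h ▸ mul_mem_support_mconv hx hy
  one_mem' := one_mem_support_of_mconv_self h
  inv_mem' := inv_mem_support

theorem eqOn_support_of_isMaxOn_of_integral_comp_mul_left_eq [IsProbabilityMeasure μ]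
    [μ.IsInvInvariant] (h : μ ∗ₘ μ = μ) {F : G → ℝ} (hF : Continuous F)
    (hint : ∀ x, Integrable (fun y => F (x * y)) μ) (hmean : ∀ x, ∫ y, F (x * y) ∂μ = F x)
    {x₀ : G} (hx₀ : x₀ ∈ μ.support) (hmax : IsMaxOn F μ.support x₀) :
    EqOn F (fun _ => F x₀) μ.support := by
  let K := supportSubgroup μ h
  have hle : ∀ᵐ y ∂μ, F (x₀ * y) ≤ F x₀ := by
    filter_upwards [support_mem_ae] with y hy using hmax (K.mul_mem hx₀ hy)
  have hconst := (hF.comp (continuous_const_mul x₀)).eqOn_support_of_ae_le_of_integral_eq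
    (hint x₀) hle (hmean x₀)
  intro x hx
  simpa using hconst (K.mul_mem (K.inv_mem hx₀) hx)

theorem integral_integral_comp_mul_left_of_mconv_self [IsFiniteMeasure μ] (h : μ ∗ₘ μ = μ)
    (hf : Continuous f) (hC : ∀ x, ‖f x‖ ≤ C) (x : G) :
    ∫ y, ∫ z, f (x * y * z) ∂μ ∂μ = ∫ y, f (x * y) ∂μ := by
  conv_rhs => rw [← h]
  rw [integral_mconv (h.symm ▸ integrable_comp_mul_left hf hC x)]
  simp only [mul_assoc]

theorem map_mul_left_eq_self_of_mem_support [LocallyCompactSpace G] [T2Space G]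
    [IsProbabilityMeasure μ] [μ.IsInvInvariant] (h : μ ∗ₘ μ = μ) {k : G}
    (hk : k ∈ μ.support) : μ.map (k * ·) = μ := by
  refine ext_of_integral_eq_on_compactlySupported_nnreal fun f => ?_
  have hf : Continuous fun x => (f x : ℝ) := by fun_prop
  have hfc : HasCompactSupport fun x => (f x : ℝ) := f.hasCompactSupport.comp_left rfl
  obtain ⟨C, hC⟩ := hf.bounded_above_of_compact_support hfc
  have hFC : ∀ x, ‖∫ y, (f (x * y) : ℝ) ∂μ‖ ≤ C := fun x => by
    simpa using norm_integral_le_of_norm_le_const (μ := μ) (ae_of_all _ fun y => hC (x * y))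
  have hF := continuous_integral_comp_mul_left (μ := μ) hf hC
  obtain ⟨x₀, hx₀, hmax⟩ := hF.exists_isMaxOn_of_tendsto_cocompact_zero
    (tendsto_integral_comp_mul_left_cocompact hf hfc) isClosed_support
    (nonempty_support (IsProbabilityMeasure.ne_zero μ))
    fun x _ => integral_nonneg fun y => (f (x * y)).2
  have hconst := eqOn_support_of_isMaxOn_of_integral_comp_mul_left_eq h hF
    (integrable_comp_mul_left hF hFC)
    (integral_integral_comp_mul_left_of_mconv_self h hf hC) hx₀ hmax
  rw [integral_map (measurable_const_mul k).aemeasurable hf.aestronglyMeasurable]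
  simpa using (hconst hk).trans (hconst (one_mem_support_of_mconv_self h)).symm

theorem isCompact_support_of_mconv_self [LocallyCompactSpace G] [T2Space G]
    [IsProbabilityMeasure μ] [μ.IsInvInvariant] (h : μ ∗ₘ μ = μ) : IsCompact μ.support := by
  obtain ⟨C, -, hC, hCμ⟩ := isOpen_univ.exists_lt_isCompact (μ := μ) (r := 2⁻¹)
    (by rw [measure_univ]; exact ENNReal.inv_lt_one.2 ENNReal.one_lt_two)
  have hCμ' : 1 < μ C + μ C :=
    calc 1 = (2⁻¹ + 2⁻¹ : ℝ≥0∞) := ENNReal.inv_two_add_inv_two.symm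
      _ < μ C + μ C := ENNReal.add_lt_add hCμ hCμ
  exact (hC.mul hC.inv).of_isClosed_subset isClosed_support fun k hk =>
    mem_mul_inv_of_map_mul_left_eq hC.measurableSet hCμ'
      (map_mul_left_eq_self_of_mem_support h hk)

end Group

end MeasureTheory.Measure

/-- A symmetric probability measure `σ` on a locally compact
(second countable Hausdorff) group `L` satisfies `σ ∗ σ = σ` (convolution) if and only if
`σ` is the normalized Haar measure of a compact subgroup `K ≤ L`, i.e. `σ` is a probability
measure giving full mass to `K` and invariant under left translation by elements of `K`. -/
theorem symmetric_idempotent_conv_iff_haar_of_compact_subgroup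
    {L : Type*} [Group L] [TopologicalSpace L] [IsTopologicalGroup L]
    [LocallyCompactSpace L] [SecondCountableTopology L] [T2Space L]
    [MeasurableSpace L] [BorelSpace L]
    (σ : Measure L) [IsProbabilityMeasure σ]
    (hsymm : σ.map (fun g => g⁻¹) = σ) :
    σ.mconv σ = σ ↔
      ∃ K : Subgroup L, IsCompact (K : Set L) ∧ σ (K : Set L) = 1 ∧
        ∀ k ∈ K, σ.map (fun x => k * x) = σ := by
  have : σ.IsInvInvariant := ⟨hsymm⟩
  constructor
  · intro h
    exact ⟨supportSubgroup σ h, isCompact_support_of_mconv_self h,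
      (prob_compl_eq_zero_iff isClosed_support.measurableSet).1 measure_compl_support,
      fun k hk => map_mul_left_eq_self_of_mem_support h hk⟩
  · rintro ⟨K, hK, hKσ, hinv⟩
    have hKae : ∀ᵐ x ∂σ, x ∈ K := (prob_compl_eq_zero_iff hK.isClosed.measurableSet).2 hKσ
    exact mconv_eq_of_ae_map_mul_left_eq (hKae.mono hinv)
end

section
/- Let P be a Markov operator on the space C₀(K,ℝ) of continuous functions vanishing at infinity on a locally compact group K, given by averaging against a probability measure σ with full support: (Pf)(k) = ∫ f(k·k') dσ(k'). If P² = P and there exists a nonzero P-invariant function g ∈ C₀(K,ℝ), then g attains its maximum and the set A = {k : g(k) = max g} satisfies A·k' = A for σ-a.e. k', hence A = K and g is constant; consequently K is compact. -/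
/-!
A nonzero invariant `g ∈ C₀(K, ℝ)` may be assumed to take a positive value (replace `g` by `-g`),
so it attains its maximum at some `m`. Invariance at `m` says that the average of
`k' ↦ g (m * k')`, a continuous function bounded by `g m`, equals `g m`; as `σ` charges every
nonempty open set, this forces `g (m * k') = g m` for all `k'`, i.e. `g` is constant. A nonzero
constant function can only vanish at infinity on a compact space.
-/

open MeasureTheory ZeroAtInfty BoundedContinuousFunction Filter Topology

section

variable {X : Type*} [TopologicalSpace X]

theorem ZeroAtInftyContinuousMap.exists_forall_le_of_pos (f : C₀(X, ℝ)) {x₀ : X}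
    (hx₀ : 0 < f x₀) : ∃ m, ∀ x, f x ≤ f m :=
  f.continuous.exists_forall_ge' x₀ (f.zero_at_infty'.eventually (eventually_le_nhds hx₀))

theorem ZeroAtInftyContinuousMap.compactSpace_of_const (f : C₀(X, ℝ)) (hf : f ≠ 0)
    (hconst : ∀ x y, f x = f y) : CompactSpace X := by
  by_contra hX
  have := cocompact_neBot_iff.mpr (not_compactSpace_iff.mp hX)
  refine hf (ZeroAtInftyContinuousMap.ext fun x => ?_)
  exact tendsto_nhds_unique tendsto_const_nhds (f.zero_at_infty'.congr fun y => hconst y x)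

theorem eq_of_le_of_integral_eq [MeasurableSpace X] [OpensMeasurableSpace X]
    (μ : Measure X) [IsProbabilityMeasure μ] [μ.IsOpenPosMeasure] {f : X → ℝ} {c : ℝ}
    (hf : Continuous f) (hfi : Integrable f μ) (hle : ∀ x, f x ≤ c) (hint : ∫ x, f x ∂μ = c)
    (x : X) : f x = c := by
  have hgap : (fun x => c - f x) =ᵐ[μ] 0 := by
    refine (integral_eq_zero_iff_of_nonneg (fun x => sub_nonneg.2 (hle x))
      ((integrable_const c).sub hfi)).mp ?_
    rw [integral_sub (integrable_const c) hfi, hint, integral_const, probReal_univ, one_smul,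
      sub_self]
  have hx : c - f x = 0 :=
    congr_fun ((Continuous.ae_eq_iff_eq μ (continuous_const.sub hf) continuous_const).mp hgap) x
  linarith

end

section

variable {K : Type*} [Group K] [TopologicalSpace K] [ContinuousMul K] [MeasurableSpace K]
  [BorelSpace K] (σ : Measure K) [IsProbabilityMeasure σ] [σ.IsOpenPosMeasure]

theorem BoundedContinuousFunction.const_of_isMax_of_integral_mul_eq (f : K →ᵇ ℝ)
    (hinv : ∀ k, ∫ k', f (k * k') ∂σ = f k) {m : K} (hm : ∀ k, f k ≤ f m) (k : K) :
    f k = f m := by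
  have htranslate : ∀ k', f (m * k') = f m :=
    eq_of_le_of_integral_eq σ (f.continuous.comp (continuous_const_mul m))
      ((f.compContinuous ⟨_, continuous_const_mul m⟩).integrable σ) (fun k' => hm _) (hinv m)
  simpa using htranslate (m⁻¹ * k)

theorem ZeroAtInftyContinuousMap.const_of_integral_mul_eq_of_pos (g : C₀(K, ℝ))
    (hinv : ∀ k, ∫ k', g (k * k') ∂σ = g k) {k₀ : K} (hk₀ : 0 < g k₀) (k k' : K) :
    g k = g k' := by
  obtain ⟨m, hm⟩ := g.exists_forall_le_of_pos hk₀
  have hmax := g.toBCF.const_of_isMax_of_integral_mul_eq σ hinv hm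
  exact (hmax k).trans (hmax k').symm

theorem ZeroAtInftyContinuousMap.const_of_integral_mul_eq (g : C₀(K, ℝ)) (hg : g ≠ 0)
    (hinv : ∀ k, ∫ k', g (k * k') ∂σ = g k) (k k' : K) : g k = g k' := by
  obtain ⟨k₀, hk₀⟩ : ∃ k₀, g k₀ ≠ 0 := by
    by_contra! h
    exact hg (ZeroAtInftyContinuousMap.ext h)
  rcases hk₀.lt_or_gt with hneg | hpos
  · have hinv_neg : ∀ k, ∫ k', (-g) (k * k') ∂σ = (-g) k := fun k => by
      simp only [coe_neg, Pi.neg_apply, integral_neg, hinv]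
    have hpos : 0 < (-g) k₀ := by simpa using hneg
    simpa using (-g).const_of_integral_mul_eq_of_pos σ hinv_neg hpos k k'
  · exact g.const_of_integral_mul_eq_of_pos σ hinv hpos k k'

end

theorem compact_of_nonzero_invariant_C0_function_general
    {K : Type*} [Group K] [TopologicalSpace K] [IsTopologicalGroup K]
    [MeasurableSpace K] [BorelSpace K]
    (σ : Measure K) [IsProbabilityMeasure σ]
    (hfull : ∀ U : Set K, IsOpen U → U.Nonempty → 0 < σ U)
    (g : C₀(K, ℝ)) (hg : g ≠ 0)
    (hinv : ∀ k : K, ∫ k', g (k * k') ∂σ = g k) :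
    (∀ k k' : K, g k = g k') ∧ CompactSpace K := by
  have : σ.IsOpenPosMeasure := ⟨fun U hU hne => (hfull U hU hne).ne'⟩
  have hconst := g.const_of_integral_mul_eq σ hg hinv
  exact ⟨hconst, g.compactSpace_of_const hg hconst⟩

/-- Let `K` be a locally compact second countable group and `σ` a regular
Borel probability measure on `K` with full support satisfying `σ ∗ σ = σ`. Consider the Markov
operator `(P f)(k) = ∫ f (k * k') dσ(k')` on `C₀(K, ℝ)`. If there is a nonzero `P`-invariant
function `g ∈ C₀(K, ℝ)`, then `g` is constant and `K` is compact. -/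
theorem compact_of_nonzero_invariant_C0_function
    {K : Type*} [Group K] [TopologicalSpace K] [IsTopologicalGroup K]
    [LocallyCompactSpace K] [SecondCountableTopology K] [T2Space K]
    [MeasurableSpace K] [BorelSpace K]
    (σ : Measure K) [IsProbabilityMeasure σ]
    (hfull : ∀ U : Set K, IsOpen U → U.Nonempty → 0 < σ U)
    (hconv : σ.mconv σ = σ)
    (g : C₀(K, ℝ)) (hg : g ≠ 0)
    (hinv : ∀ k : K, ∫ k', g (k * k') ∂σ = g k) :
    (∀ k k' : K, g k = g k') ∧ CompactSpace K :=
  compact_of_nonzero_invariant_C0_function_general σ hfull g hg hinv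
end

section
/- Alignment is insensitive to finite index: let Γ' ≤ Γ be a finite index subgroup of a countable group Γ acting measure-class-preservingly on (X,m), with continuous Γ-action on B and measurable Γ-equivariant π : X → B. Then (π : (X,m) → B; Γ') is an alignment system if and only if (π : (X,m) → B; Γ) is. -/
/-!
Restricting the acting group only enlarges the class of equivariant maps, so `Γ'`-alignment
gives `Γ`-alignment at once. Conversely, a `Γ'`-equivariant `p : X → P(B)` is induced up to a
`Γ`-equivariant map by averaging `x ↦ g • p (g⁻¹ • x)` over representatives `g` of the cosets
`Γ ⧸ Γ'`. By `Γ`-alignment this average is `δ_{π x}` almost everywhere, and since `p x` is one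
of its `[Γ : Γ']` summands, `p x ≪ δ_{π x}`, which forces `p x = δ_{π x}`.
-/

open MeasureTheory

/-- The alignment property: `x ↦ δ_{π x}` is the only (mod `μ`-null sets) measurable
`Λ`-equivariant map from `(X, μ)` to the space of probability measures on `B`. -/
def IsAlignmentSystem (Γ : Type*) {X B : Type*} [Group Γ] [MeasurableSpace X]
    [MeasurableSpace B] [MulAction Γ X] [MulAction Γ B]
    (μ : Measure X) (π : X → B) : Prop :=
  ∀ p : X → Measure B, Measurable p →
    (∀ x, IsProbabilityMeasure (p x)) →
    (∀ γ : Γ, ∀ᵐ x ∂μ, p (γ • x) = (p x).map (fun b => γ • b)) →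
    ∀ᵐ x ∂μ, p x = Measure.dirac (π x)

open scoped ENNReal

theorem MeasureTheory.Measure.eq_dirac_of_absolutelyContinuous {β : Type*} [MeasurableSpace β]
    {ν : Measure β} [IsProbabilityMeasure ν] {b : β} (h : ν ≪ Measure.dirac b) :
    ν = Measure.dirac b := by
  ext s hs
  by_cases hb : b ∈ s
  · rw [Measure.dirac_apply_of_mem hb, ← prob_compl_eq_zero_iff hs]
    exact h (by simp [Measure.dirac_apply' b hs.compl, hb])
  · rw [Measure.dirac_apply' b hs, Set.indicator_of_notMem hb]
    exact h (by simp [Measure.dirac_apply' b hs, hb])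

theorem QuotientGroup.out_smul_inv_mul_mul_out_mem {G : Type*} [Group G] (H : Subgroup G)
    (g : G) (q : G ⧸ H) : (g • q).out⁻¹ * (g * q.out) ∈ H := by
  rw [← QuotientGroup.eq, QuotientGroup.out_eq', ← smul_eq_mul, MulAction.Quotient.mk_smul_out]

section CosetSum

variable {Γ X B : Type*} [Group Γ] [MulAction Γ X] [MulAction Γ B] [MeasurableSpace B]

noncomputable def cosetSum (H : Subgroup Γ) [Fintype (Γ ⧸ H)] (p : X → Measure B) (x : X) :
    Measure B :=
  ∑ c : Γ ⧸ H, (p (c.out⁻¹ • x)).map (c.out • ·)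

noncomputable def cosetAverage (H : Subgroup Γ) [Fintype (Γ ⧸ H)] (p : X → Measure B) (x : X) :
    Measure B :=
  (H.index : ℝ≥0∞)⁻¹ • cosetSum H p x

variable (H : Subgroup Γ) [Fintype (Γ ⧸ H)]

lemma index_smul_cosetAverage [H.FiniteIndex] (p : X → Measure B) (x : X) :
    (H.index : ℝ≥0∞) • cosetAverage H p x = cosetSum H p x := by
  rw [cosetAverage, smul_smul, ENNReal.mul_inv_cancel (by simp [H.index_ne_zero_of_finite])
    (ENNReal.natCast_ne_top _), one_smul]

variable [MeasurableConstSMul Γ B]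

lemma isProbabilityMeasure_cosetAverage [H.FiniteIndex] {p : X → Measure B}
    (hp : ∀ x, IsProbabilityMeasure (p x)) (x : X) :
    IsProbabilityMeasure (cosetAverage H p x) := by
  have hsum : cosetSum H p x Set.univ = H.index := by
    simp [cosetSum, Measure.finsetSum_apply, Measure.map_apply (measurable_const_smul _),
      H.index_eq_card, Nat.card_eq_fintype_card]
  constructor
  rw [cosetAverage, Measure.smul_apply, hsum, smul_eq_mul,
    ENNReal.inv_mul_cancel (by simp [H.index_ne_zero_of_finite]) (ENNReal.natCast_ne_top _)]

lemma measurable_cosetAverage [MeasurableSpace X] [MeasurableConstSMul Γ X] {p : X → Measure B}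
    (hp : Measurable p) : Measurable (cosetAverage H p) := by
  refine Measure.measurable_of_measurable_coe _ fun s hs => ?_
  simp only [cosetAverage, cosetSum, Measure.smul_apply, Measure.finsetSum_apply,
    Measure.map_apply (measurable_const_smul _) hs, smul_eq_mul]
  refine Measurable.const_mul (Finset.measurable_sum _ fun c _ => ?_) _
  exact (Measure.measurable_coe (measurable_const_smul _ hs)).comp
    (hp.comp (measurable_const_smul _))

omit [Fintype (Γ ⧸ H)] in
lemma map_smul_inv_smul_eq {p : X → Measure B} {g a γ : Γ} {x : X}
    (hx : p ((g⁻¹ * (γ * a)) • a⁻¹ • x) = (p (a⁻¹ • x)).map ((g⁻¹ * (γ * a)) • ·)) :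
    (p (g⁻¹ • γ • x)).map (g • ·) = ((p (a⁻¹ • x)).map (a • ·)).map (γ • ·) := by
  have hpt : (g⁻¹ * (γ * a)) • a⁻¹ • x = g⁻¹ • γ • x := by simp [smul_smul, mul_assoc]
  rw [← hpt, hx, Measure.map_map (measurable_const_smul _) (measurable_const_smul _),
    Measure.map_map (measurable_const_smul _) (measurable_const_smul _)]
  congr 1
  funext b
  simp [smul_smul]

variable [MeasurableSpace X] {μ : Measure X}
  (hμ : ∀ γ : Γ, Measure.QuasiMeasurePreserving (γ • ·) μ μ) {p : X → Measure B}
  (hp : ∀ h : H, ∀ᵐ x ∂μ, p (h • x) = (p x).map (h • ·))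
include hμ hp

lemma cosetSum_smul_ae (γ : Γ) :
    ∀ᵐ x ∂μ, cosetSum H p (γ • x) = (cosetSum H p x).map (γ • ·) := by
  have hterm : ∀ᵐ x ∂μ, ∀ c : Γ ⧸ H, (p ((γ • c).out⁻¹ • γ • x)).map ((γ • c).out • ·)
      = ((p (c.out⁻¹ • x)).map (c.out • ·)).map (γ • ·) := by
    refine ae_all_iff.mpr fun c => ?_
    filter_upwards [(hμ c.out⁻¹).ae
      (hp ⟨_, QuotientGroup.out_smul_inv_mul_mul_out_mem H γ c⟩)] with x hx
    exact map_smul_inv_smul_eq hx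
  filter_upwards [hterm] with x hx
  rw [cosetSum, cosetSum, Measure.map_finset_sum (measurable_const_smul γ).aemeasurable,
    ← Equiv.sum_comp (MulAction.toPerm γ)]
  exact Finset.sum_congr rfl fun c _ => hx c

lemma cosetAverage_smul_ae (γ : Γ) :
    ∀ᵐ x ∂μ, cosetAverage H p (γ • x) = (cosetAverage H p x).map (γ • ·) := by
  filter_upwards [cosetSum_smul_ae H hμ hp γ] with x hx
  rw [cosetAverage, cosetAverage, hx, Measure.map_smul]

omit [MeasurableConstSMul Γ B] in
lemma ae_le_cosetSum : ∀ᵐ x ∂μ, p x ≤ cosetSum H p x := by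
  set c₀ : Γ ⧸ H := ((1 : Γ) : Γ ⧸ H)
  have hc₀ : c₀.out ∈ H := by
    simpa using QuotientGroup.eq.mp (QuotientGroup.out_eq' c₀)
  filter_upwards [(hμ c₀.out⁻¹).ae (hp ⟨_, hc₀⟩)] with x hx
  calc p x = (p (c₀.out⁻¹ • x)).map (c₀.out • ·) := by simpa using hx
    _ ≤ cosetSum H p x :=
      Finset.single_le_sum (f := fun c : Γ ⧸ H => (p (c.out⁻¹ • x)).map (c.out • ·))
        (fun _ _ => Measure.zero_le _) (Finset.mem_univ c₀)

end CosetSum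

theorem alignment_finite_index_iff_general
    {Γ X B : Type*} [Group Γ]
    [MeasurableSpace X] [TopologicalSpace B] [MeasurableSpace B] [BorelSpace B]
    [MulAction Γ X] [MulAction Γ B]
    (hmX : ∀ γ : Γ, Measurable (fun x : X => γ • x))
    (hcB : ∀ γ : Γ, Continuous (fun b : B => γ • b))
    (μ : Measure X)
    (hqi : ∀ γ : Γ, μ.map (fun x => γ • x) ≪ μ ∧ μ ≪ μ.map (fun x => γ • x))
    (π : X → B)
    (Γ' : Subgroup Γ) [Γ'.FiniteIndex] :
    IsAlignmentSystem Γ' μ π ↔ IsAlignmentSystem Γ μ π := by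
  have : Fintype (Γ ⧸ Γ') := Fintype.ofFinite _
  have : MeasurableConstSMul Γ X := ⟨hmX⟩
  have : MeasurableConstSMul Γ B := ⟨fun γ => (hcB γ).measurable⟩
  have hμ : ∀ γ : Γ, Measure.QuasiMeasurePreserving (γ • ·) μ μ := fun γ => ⟨hmX γ, (hqi γ).1⟩
  refine ⟨fun hA p hp hprob hpeq => hA p hp hprob fun γ => hpeq γ, fun hA p hp hprob hpeq => ?_⟩
  have hdirac := hA _ (measurable_cosetAverage Γ' hp) (isProbabilityMeasure_cosetAverage Γ' hprob)
    (cosetAverage_smul_ae Γ' hμ hpeq)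
  filter_upwards [hdirac, ae_le_cosetSum Γ' hμ hpeq] with x hx hle
  rw [← index_smul_cosetAverage, hx] at hle
  exact Measure.eq_dirac_of_absolutelyContinuous (Measure.absolutelyContinuous_of_le_smul hle)

/-- Alignment is insensitive to finite index: for a finite index subgroup
`Γ' ≤ Γ`, the system `(π : (X, μ) → B)` is an alignment system for `Γ'` if and only if it
is an alignment system for `Γ`. -/
theorem alignment_finite_index_iff
    {Γ X B : Type*} [Group Γ] [Countable Γ]
    [MeasurableSpace X] [TopologicalSpace B] [MeasurableSpace B] [BorelSpace B]
    [MulAction Γ X] [MulAction Γ B]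
    (hmX : ∀ γ : Γ, Measurable (fun x : X => γ • x))
    (hcB : ∀ γ : Γ, Continuous (fun b : B => γ • b))
    (μ : Measure X)
    (hqi : ∀ γ : Γ, μ.map (fun x => γ • x) ≪ μ ∧ μ ≪ μ.map (fun x => γ • x))
    (π : X → B) (hπ : Measurable π)
    (hπeq : ∀ (γ : Γ) (x : X), π (γ • x) = γ • π x)
    (Γ' : Subgroup Γ) [Γ'.FiniteIndex] :
    IsAlignmentSystem Γ' μ π ↔ IsAlignmentSystem Γ μ π :=
  alignment_finite_index_iff_general hmX hcB μ hqi π Γ'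
end

section
/- Radon–Nikodym character of a commuting locally compact action: let (X,m,Γ) be an ergodic infinite measure preserving system, and let L be a locally compact group acting measurably and faithfully on (X,m) by measure class preserving transformations commuting with Γ. Then there exists a continuous multiplicative character Δ : L → ℝ₊* such that g_* m = Δ(g)·m for all g ∈ L. -/
/-!
For `g : L`, the measure `g_* m` is `Γ`-invariant (the actions commute) and absolutely continuous
with respect to `m`, so its Radon–Nikodym derivative is a `Γ`-invariant function, hence a.e.
constant by ergodicity: `g_* m = Δ(g) • m`. Since the constant is unique, `Δ` is multiplicative;
it is measurable because `Δ(g) = m(g⁻¹ • s) / m(s)` for a fixed `s` of positive finite measure,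
and a measurable homomorphism on a locally compact group is continuous by Steinhaus' theorem.
-/

open MeasureTheory

/-- Ergodicity of a group action on a measure space: any invariant measurable set is
null or conull. -/
def SMulErgodic (Γ : Type*) {X : Type*} [SMul Γ X] [MeasurableSpace X]
    (μ : Measure X) : Prop :=
  ∀ s : Set X, MeasurableSet s → (∀ γ : Γ, (fun x => γ • x) ⁻¹' s = s) →
    μ s = 0 ∨ μ sᶜ = 0

open Filter Topology
open scoped NNReal ENNReal Pointwise

theorem MeasureTheory.Measure.rnDeriv_comp_ae_eq_of_map_eq {X : Type*}
    [MeasurableSpace X] {μ ν : Measure X} [SigmaFinite μ] [SigmaFinite ν] (e : X ≃ᵐ X) (hμ : μ.map e = μ) (hν : ν.map e = ν) :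
    (fun x => ν.rnDeriv μ (e x)) =ᵐ[μ] ν.rnDeriv μ := by
  simpa only [hμ, hν] using e.measurableEmbedding.rnDeriv_map ν μ

theorem MeasureTheory.Measure.nnreal_smul_left_injective {X : Type*} [MeasurableSpace X]
    {μ : Measure X} [SigmaFinite μ] (hμ : μ ≠ 0) : Function.Injective fun c : ℝ≥0 => c • μ := by
  obtain ⟨s, -, -, hs0, hs_top⟩ :=
    Measure.exists_subset_measure_lt_top MeasurableSet.univ (Measure.measure_univ_pos.2 hμ)
  intro a b hab
  have := congrArg (fun ν : Measure X => ν s) hab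
  simpa [ENNReal.mul_left_inj hs0.ne' hs_top.ne] using this

namespace SMulErgodic

variable {Γ X : Type*} [Group Γ] [Countable Γ] [MulAction Γ X] [MeasurableSpace X]
  [MeasurableConstSMul Γ X] {μ : Measure X}

theorem eventuallyConst_of_preimage_smul_ae_eq (herg : SMulErgodic Γ μ) {s : Set X}
    (hs : MeasurableSet s) (h : ∀ γ : Γ, (γ • ·) ⁻¹' s =ᵐ[μ] s) : EventuallyConst s (ae μ) := by
  -- `t` is strictly invariant and a.e. equal to `s`, so ergodicity applies to it
  set t := ⋂ γ : Γ, (γ • ·) ⁻¹' s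
  have ht : t =ᵐ[μ] s := by
    simpa only [Set.iInter_const] using Filter.EventuallyEq.countable_iInter h
  have ht_inv : ∀ δ : Γ, (δ • ·) ⁻¹' t = t := by
    intro δ
    ext x
    simp only [t, Set.mem_preimage, Set.mem_iInter, smul_smul]
    exact (Equiv.mulRight δ).forall_congr_right (q := fun γ => γ • x ∈ s)
  refine (eventuallyConst_set'.2 ?_).congr ht
  rcases herg t (MeasurableSet.iInter fun γ => measurable_const_smul γ hs) ht_inv with h0 | h0
  · exact Or.inl (ae_eq_empty.2 h0)
  · exact Or.inr (ae_eq_univ.2 h0)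

theorem exists_ae_eq_const_of_comp_smul_ae_eq {Y : Type*} [MeasurableSpace Y] [Nonempty Y]
    [MeasurableSpace.CountablySeparated Y] (herg : SMulErgodic Γ μ) {f : X → Y}
    (hf : Measurable f) (h : ∀ γ : Γ, (fun x => f (γ • x)) =ᵐ[μ] f) :
    ∃ c, f =ᵐ[μ] Function.const X c :=
  exists_eventuallyEq_const_of_forall_separating MeasurableSet fun U hU =>
    eventuallyConst_set.1 <| herg.eventuallyConst_of_preimage_smul_ae_eq (hf hU) fun γ =>
      (h γ).mono fun _ hx => congrArg (· ∈ U) hx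

theorem exists_eq_smul_of_absolutelyContinuous (herg : SMulErgodic Γ μ) [SigmaFinite μ]
    (hμ : ∀ γ : Γ, μ.map (γ • ·) = μ) {ν : Measure X} [SigmaFinite ν]
    (hν : ∀ γ : Γ, ν.map (γ • ·) = ν) (hνμ : ν ≪ μ) : ∃ c : ℝ≥0, ν = c • μ := by
  rcases eq_or_ne μ 0 with rfl | hμ0
  · exact ⟨0, by simpa using hνμ⟩
  obtain ⟨c, hc⟩ := herg.exists_ae_eq_const_of_comp_smul_ae_eq (Measure.measurable_rnDeriv ν μ)
    fun γ => Measure.rnDeriv_comp_ae_eq_of_map_eq (MeasurableEquiv.smul γ) (hμ γ) (hν γ)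
  have hc_top : c ≠ ∞ := by
    have := ae_neBot.2 hμ0
    obtain ⟨x, hx_lt, hx_eq⟩ := ((Measure.rnDeriv_lt_top ν μ).and hc).exists
    exact (hx_eq ▸ hx_lt).ne
  refine ⟨c.toNNReal, ?_⟩
  rw [← Measure.coe_nnreal_smul, ENNReal.coe_toNNReal hc_top,
    ← Measure.withDensity_rnDeriv_eq ν μ hνμ, withDensity_congr_ae hc]
  exact withDensity_const c

end SMulErgodic

section ScalingCharacter

variable {L X : Type*} [Group L] [MulAction L X] [MeasurableSpace X] {μ : Measure X}
  [SigmaFinite μ] {Δ : L → ℝ≥0}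

theorem map_one_of_map_smul_eq_smul (hμ : μ ≠ 0) (hΔ : ∀ g : L, μ.map (g • ·) = Δ g • μ) :
    Δ 1 = 1 := by
  refine Measure.nnreal_smul_left_injective hμ ?_
  simp only [← hΔ, one_smul, Measure.map_id']

theorem map_mul_of_map_smul_eq_smul [MeasurableConstSMul L X] (hμ : μ ≠ 0)
    (hΔ : ∀ g : L, μ.map (g • ·) = Δ g • μ) (g h : L) : Δ (g * h) = Δ g * Δ h := by
  refine Measure.nnreal_smul_left_injective hμ ?_
  show Δ (g * h) • μ = (Δ g * Δ h) • μ
  rw [← hΔ, mul_comm, ← smul_smul, ← hΔ, ← Measure.map_smul, ← hΔ,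
    Measure.map_map (measurable_const_smul g) (measurable_const_smul h)]
  simp only [Function.comp_def, smul_smul]

theorem measurable_of_map_smul_eq_smul [MeasurableSpace L] [MeasurableSMul₂ L X] (hμ : μ ≠ 0)
    (hΔ : ∀ g : L, μ.map (g • ·) = Δ g • μ) : Measurable Δ := by
  obtain ⟨s, hs, -, hs0, hs_top⟩ :=
    Measure.exists_subset_measure_lt_top MeasurableSet.univ (Measure.measure_univ_pos.2 hμ)
  have hΔs : ∀ g, Δ g = (μ ((g • ·) ⁻¹' s) / μ s).toNNReal := fun g => by
    rw [← Measure.map_apply (measurable_const_smul g) hs, hΔ, Measure.smul_apply,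
      ENNReal.smul_def, smul_eq_mul, ENNReal.mul_div_cancel_right hs0.ne' hs_top.ne,
      ENNReal.toNNReal_coe]
  rw [funext hΔs]
  exact ((measurable_measure_prodMk_left (measurable_smul hs)).div_const _).ennreal_toNNReal

end ScalingCharacter

section AutomaticContinuity

variable {G : Type*} [Group G] [TopologicalSpace G] [IsTopologicalGroup G] [LocallyCompactSpace G]
  [MeasurableSpace G] [BorelSpace G]

theorem continuous_of_measurable_of_map_mul_eq_add {ψ : G → ℝ} (hψ : Measurable ψ)
    (hmul : ∀ g h, ψ (g * h) = ψ g + ψ h) : Continuous ψ := by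
  have hdiv : ∀ a b, ψ (a / b) = ψ a - ψ b := fun a b => by
    rw [eq_sub_iff_add_eq, ← hmul, div_mul_cancel]
  have hsmall : ∀ ε > 0, ∀ᶠ g in 𝓝 1, |ψ g| < ε := by
    intro ε hε
    let K : TopologicalSpace.PositiveCompacts G := Classical.arbitrary _
    let E : ℤ → Set G := fun k => interior K ∩ (fun g => ⌊ψ g / ε⌋) ⁻¹' {k}
    obtain ⟨k, hk⟩ : ∃ k, 0 < Measure.haar (E k) := by
      refine exists_measure_pos_of_not_measure_iUnion_null fun h => ?_
      refine (isOpen_interior.measure_pos Measure.haar K.interior_nonempty).ne' ?_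
      simpa [E, ← Set.inter_iUnion, ← Set.preimage_iUnion, Set.iUnion_of_singleton] using h
    -- `ψ` varies by less than `ε` on `E k`, and `E k / E k ∈ 𝓝 1` by Steinhaus' theorem
    refine mem_of_superset
      (Measure.div_mem_nhds_one_of_haar_pos_ne_top Measure.haar (E k) ?_ hk ?_) ?_
    · exact isOpen_interior.measurableSet.inter
        ((Int.measurable_floor.comp (hψ.div_const ε)) (measurableSet_singleton k))
    · exact measure_ne_top_of_subset (Set.inter_subset_left.trans interior_subset)
        K.isCompact.measure_lt_top.ne
    · rintro _ ⟨a, ⟨-, ha⟩, b, ⟨-, hb⟩, rfl⟩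
      have := Int.abs_sub_lt_one_of_floor_eq_floor (ha.trans hb.symm)
      rwa [← sub_div, abs_div, abs_of_pos hε, div_lt_one hε, ← hdiv] at this
  have hψ1 : Tendsto ψ (𝓝 1) (𝓝 0) := by
    rw [Metric.tendsto_nhds]
    simpa [Real.dist_eq] using hsmall
  refine continuous_iff_continuousAt.2 fun g₀ => ?_
  have : Tendsto (fun g => ψ (g / g₀) + ψ g₀) (𝓝 g₀) (𝓝 (0 + ψ g₀)) :=
    (hψ1.comp (by simpa using (continuous_div_right' g₀).tendsto g₀)).add_const _
  simpa [hdiv, ContinuousAt] using this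

theorem continuous_of_measurable_of_map_mul {φ : G → ℝ≥0} (hφ : Measurable φ)
    (hmul : ∀ g h, φ (g * h) = φ g * φ h) (h0 : ∀ g, φ g ≠ 0) : Continuous φ := by
  have hpos : ∀ g, 0 < (φ g : ℝ) := fun g => NNReal.coe_pos.2 (pos_iff_ne_zero.2 (h0 g))
  have hlog : Continuous fun g => Real.log (φ g) :=
    continuous_of_measurable_of_map_mul_eq_add (by fun_prop) fun g h => by
      rw [hmul, NNReal.coe_mul, Real.log_mul (hpos g).ne' (hpos h).ne']
  have hexp : ((↑) ∘ φ : G → ℝ) = fun g => Real.exp (Real.log (φ g)) :=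
    funext fun g => (Real.exp_log (hpos g)).symm
  exact continuous_induced_rng.2 (hexp ▸ Real.continuous_exp.comp hlog)

end AutomaticContinuity

theorem radon_nikodym_character_general
    {Γ L X : Type*} [Group Γ] [Countable Γ]
    [Group L] [TopologicalSpace L] [IsTopologicalGroup L]
    [LocallyCompactSpace L]
    [MeasurableSpace L] [BorelSpace L]
    [MeasurableSpace X]
    [MulAction Γ X] [MulAction L X]
    (hmΓ : ∀ γ : Γ, Measurable (fun x : X => γ • x))
    (hmL : Measurable (fun q : L × X => q.1 • q.2))
    (m : Measure X) [SigmaFinite m] (hinf : m Set.univ = ⊤)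
    (hmp : ∀ γ : Γ, m.map (fun x => γ • x) = m)
    (herg : SMulErgodic Γ m)
    (hqi : ∀ g : L, m.map (fun x => g • x) ≪ m ∧ m ≪ m.map (fun x => g • x))
    (hcomm : ∀ (γ : Γ) (g : L) (x : X), γ • (g • x) = g • (γ • x)) :
    ∃ Δ : L → NNReal, Continuous Δ ∧ Δ 1 = 1 ∧
      (∀ g h : L, Δ (g * h) = Δ g * Δ h) ∧ (∀ g : L, Δ g ≠ 0) ∧
      ∀ g : L, m.map (fun x => g • x) = (Δ g) • m := by
  have : MeasurableConstSMul Γ X := ⟨hmΓ⟩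
  have : MeasurableSMul₂ L X := ⟨hmL⟩
  have hm0 : m ≠ 0 := fun h => by simp [h] at hinf
  have hinv : ∀ (g : L) (γ : Γ), (m.map (g • ·)).map (γ • ·) = m.map (g • ·) := fun g γ => by
    conv_rhs => rw [← hmp γ]
    rw [Measure.map_map (measurable_const_smul γ) (measurable_const_smul g),
      Measure.map_map (measurable_const_smul g) (measurable_const_smul γ)]
    exact congrArg (m.map ·) (funext (hcomm γ g))
  have hscale : ∀ g : L, ∃ c : ℝ≥0, m.map (g • ·) = c • m := fun g =>
    have := (measurableEmbedding_const_smul g).sigmaFinite_map (μ := m)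
    herg.exists_eq_smul_of_absolutelyContinuous hmp (hinv g) (hqi g).1
  choose Δ hΔ using hscale
  have hone := map_one_of_map_smul_eq_smul hm0 hΔ
  have hmul := map_mul_of_map_smul_eq_smul hm0 hΔ
  have hne : ∀ g, Δ g ≠ 0 := fun g h0 => by
    simpa [← hmul, hone, h0] using hmul g g⁻¹
  exact ⟨Δ, continuous_of_measurable_of_map_mul (measurable_of_map_smul_eq_smul hm0 hΔ) hmul hne,
    hone, hmul, hne, hΔ⟩

/-- Radon–Nikodym character of a commuting locally compact action:
if `Γ` acts ergodically on the infinite (σ-finite) measure space `(X, m)` preserving `m`,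
and the locally compact group `L` acts measurably and faithfully on `(X, m)` preserving
the measure class of `m` and commuting with `Γ`, then there is a continuous multiplicative
character `Δ : L → ℝ₊*` with `g_* m = Δ(g) • m` for all `g ∈ L`. -/
theorem radon_nikodym_character
    {Γ L X : Type*} [Group Γ] [Countable Γ]
    [Group L] [TopologicalSpace L] [IsTopologicalGroup L]
    [LocallyCompactSpace L] [SecondCountableTopology L] [T2Space L]
    [MeasurableSpace L] [BorelSpace L]
    [MeasurableSpace X]
    [MulAction Γ X] [MulAction L X] [FaithfulSMul L X]
    (hmΓ : ∀ γ : Γ, Measurable (fun x : X => γ • x))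
    (hmL : Measurable (fun q : L × X => q.1 • q.2))
    (m : Measure X) [SigmaFinite m] (hinf : m Set.univ = ⊤)
    (hmp : ∀ γ : Γ, m.map (fun x => γ • x) = m)
    (herg : SMulErgodic Γ m)
    (hqi : ∀ g : L, m.map (fun x => g • x) ≪ m ∧ m ≪ m.map (fun x => g • x))
    (hcomm : ∀ (γ : Γ) (g : L) (x : X), γ • (g • x) = g • (γ • x)) :
    ∃ Δ : L → NNReal, Continuous Δ ∧ Δ 1 = 1 ∧
      (∀ g h : L, Δ (g * h) = Δ g * Δ h) ∧ (∀ g : L, Δ g ≠ 0) ∧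
      ∀ g : L, m.map (fun x => g • x) = (Δ g) • m :=
  radon_nikodym_character_general hmΓ hmL m hinf hmp herg hqi hcomm
end

section
/- SAT rigidity of equivariant maps: let Γ act measure-class-preservingly on a standard probability space (B,ν) such that the action is strongly almost transitive (SAT): for every A ⊆ B with ν(A) > 0 there are γₙ ∈ Γ with ν(γₙ⁻¹A) → 1. Let C be a standard Borel Γ-space and π₁, π₂ : B → C measurable maps with πᵢ(γx) = γπᵢ(x) for ν-a.e. x and all γ ∈ Γ. Then either π₁ = π₂ ν-a.e., or the pushforward measures (π₁)_*ν and (π₂)_*ν are mutually singular. -/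
/-!
If `π₁` and `π₂` differ on a set of positive measure, a countable separating family of `C`
yields a measurable `U` with `A = π₁⁻¹ U ∩ π₂⁻¹ Uᶜ` non-null. By equivariance
`γ⁻¹ A = π₁⁻¹ (γ⁻¹ U) ∩ π₂⁻¹ (γ⁻¹ U)ᶜ` a.e., so along the SAT sequence `γₙ` the sets
`Vₙ = γₙ⁻¹ U` have `(π₁)_*ν`-measure tending to `1` and `(π₂)_*ν`-measure tending to `0`.
Passing to a subsequence along which both errors are summable, Borel–Cantelli makes
`limsup Vₙᶜ` a `(π₁)_*ν`-null set whose complement is `(π₂)_*ν`-null.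
-/

open MeasureTheory Filter Topology ENNReal

namespace MeasureTheory

variable {α β : Type*} [MeasurableSpace α]

theorem tendsto_measure_zero_of_disjoint_of_tendsto_one {ν : Measure α} [IsProbabilityMeasure ν]
    {S T : ℕ → Set α} (hT : ∀ n, MeasurableSet (T n)) (hST : ∀ n, Disjoint (S n) (T n))
    (h : Tendsto (fun n => ν (T n)) atTop (𝓝 1)) : Tendsto (fun n => ν (S n)) atTop (𝓝 0) := by
  have hcompl : Tendsto (fun n => 1 - ν (T n)) atTop (𝓝 0) := by
    simpa using ENNReal.Tendsto.sub tendsto_const_nhds h (Or.inl one_ne_top)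
  refine tendsto_of_tendsto_of_tendsto_of_le_of_le tendsto_const_nhds hcompl (fun _ => zero_le)
    fun n => ?_
  rw [← prob_compl_eq_one_sub (hT n)]
  exact measure_mono (hST n).subset_compl_right

namespace Measure

theorem mutuallySingular_of_tsum_ne_top {μ ν : Measure α} {V : ℕ → Set α}
    (hV : ∀ n, MeasurableSet (V n)) (hμ : ∑' n, μ (V n)ᶜ ≠ ∞) (hν : ∑' n, ν (V n) ≠ ∞) :
    μ ⟂ₘ ν := by
  refine ⟨limsup (fun n => (V n)ᶜ) atTop,
    MeasurableSet.measurableSet_limsup fun n => (hV n).compl, measure_limsup_atTop_eq_zero hμ, ?_⟩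
  rw [limsup_compl]
  simp only [Function.comp_def, compl_compl]
  exact measure_mono_null liminf_le_limsup (measure_limsup_atTop_eq_zero hν)

theorem mutuallySingular_of_tendsto {μ ν : Measure α} {V : ℕ → Set α}
    (hV : ∀ n, MeasurableSet (V n)) (hμ : Tendsto (fun n => μ (V n)ᶜ) atTop (𝓝 0))
    (hν : Tendsto (fun n => ν (V n)) atTop (𝓝 0)) : μ ⟂ₘ ν := by
  have hsub : ∀ k : ℕ, ∃ n, μ (V n)ᶜ ≤ 2⁻¹ ^ k ∧ ν (V n) ≤ 2⁻¹ ^ k := fun k =>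
    have hk : (0 : ℝ≥0∞) < 2⁻¹ ^ k := ENNReal.pow_pos (by norm_num) k
    ((hμ.eventually (eventually_le_nhds hk)).and (hν.eventually (eventually_le_nhds hk))).exists
  choose φ hφ using hsub
  have hgeom : ∑' k : ℕ, (2⁻¹ : ℝ≥0∞) ^ k ≠ ∞ := by
    rw [ENNReal.tsum_geometric_two]
    exact ofNat_ne_top
  exact mutuallySingular_of_tsum_ne_top (fun k => hV (φ k))
    (ne_top_of_le_ne_top hgeom (ENNReal.tsum_le_tsum fun k => (hφ k).1))
    (ne_top_of_le_ne_top hgeom (ENNReal.tsum_le_tsum fun k => (hφ k).2))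

theorem mutuallySingular_map_of_tendsto_measure_inter {ν : Measure α}
    [IsProbabilityMeasure ν] [MeasurableSpace β] {f g : α → β} (hf : Measurable f)
    (hg : Measurable g) {V : ℕ → Set β} (hV : ∀ n, MeasurableSet (V n))
    (h : Tendsto (fun n => ν (f ⁻¹' V n ∩ g ⁻¹' (V n)ᶜ)) atTop (𝓝 1)) :
    ν.map f ⟂ₘ ν.map g := by
  have hT : ∀ n, MeasurableSet (f ⁻¹' V n ∩ g ⁻¹' (V n)ᶜ) := fun n =>
    (hf (hV n)).inter (hg (hV n).compl)
  refine mutuallySingular_of_tendsto hV ?_ ?_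
  · simp_rw [Measure.map_apply hf (hV _).compl]
    exact tendsto_measure_zero_of_disjoint_of_tendsto_one hT
      (fun n => disjoint_compl_left.mono_right Set.inter_subset_left) h
  · simp_rw [Measure.map_apply hg (hV _)]
    exact tendsto_measure_zero_of_disjoint_of_tendsto_one hT
      (fun n => disjoint_compl_right.mono_right Set.inter_subset_right) h

end Measure

theorem exists_measurableSet_measure_preimage_inter_preimage_compl_ne_zero
    [MeasurableSpace β] [MeasurableSpace.CountablySeparated β] {ν : Measure α} {f g : α → β}
    (h : ¬ f =ᵐ[ν] g) : ∃ U, MeasurableSet U ∧ ν (f ⁻¹' U ∩ g ⁻¹' Uᶜ) ≠ 0 := by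
  by_contra! hnull
  refine h (EventuallyEq.of_forall_separating_mem_iff MeasurableSet fun U hU => ?_)
  filter_upwards [measure_eq_zero_iff_ae_notMem.1 (hnull U hU),
    measure_eq_zero_iff_ae_notMem.1 (hnull Uᶜ hU.compl)] with b hb hbc
  simp only [Set.mem_inter_iff, Set.mem_preimage, Set.mem_compl_iff, not_not, not_and,
    not_imp_not] at hb hbc
  exact ⟨hb, hbc⟩

end MeasureTheory

theorem sat_rigidity_of_equivariant_maps_general
    {Γ B C : Type*} [Group Γ]
    [MeasurableSpace B]
    [MeasurableSpace C] [StandardBorelSpace C]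
    [MulAction Γ B] [MulAction Γ C]
    (hmC : ∀ γ : Γ, Measurable (fun c : C => γ • c))
    (ν : Measure B) [IsProbabilityMeasure ν]
    (hSAT : ∀ A : Set B, MeasurableSet A → 0 < ν A →
      ∃ γ : ℕ → Γ, Tendsto (fun n => ν ((fun b => γ n • b) ⁻¹' A)) atTop (nhds 1))
    (π₁ π₂ : B → C) (h₁ : Measurable π₁) (h₂ : Measurable π₂)
    (heq₁ : ∀ γ : Γ, ∀ᵐ b ∂ν, π₁ (γ • b) = γ • π₁ b)
    (heq₂ : ∀ γ : Γ, ∀ᵐ b ∂ν, π₂ (γ • b) = γ • π₂ b) :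
    (∀ᵐ b ∂ν, π₁ b = π₂ b) ∨
      Measure.MutuallySingular (ν.map π₁) (ν.map π₂) := by
  by_cases hae : π₁ =ᵐ[ν] π₂
  · exact Or.inl hae
  right
  obtain ⟨U, hU, hpos⟩ := exists_measurableSet_measure_preimage_inter_preimage_compl_ne_zero hae
  obtain ⟨γ, hγ⟩ := hSAT _ ((h₁ hU).inter (h₂ hU.compl)) (pos_iff_ne_zero.2 hpos)
  refine Measure.mutuallySingular_map_of_tendsto_measure_inter h₁ h₂
    (V := fun n => (fun c => γ n • c) ⁻¹' U) (fun n => hmC _ hU) (hγ.congr fun n => ?_)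
  exact measure_congr ((EventuallyEq.preimage (heq₁ (γ n)) U).inter
    (EventuallyEq.preimage (heq₂ (γ n)) Uᶜ))

/-- SAT rigidity of equivariant maps: if the measure class preserving
action of the countable group `Γ` on the standard probability space `(B, ν)` is strongly
almost transitive (for every positive measure set `A` there are `γₙ` with
`ν(γₙ⁻¹ A) → 1`), and `π₁, π₂ : B → C` are measurable `ν`-a.e. `Γ`-equivariant maps to a
standard Borel `Γ`-space `C`, then either `π₁ = π₂` ν-a.e. or `(π₁)_*ν ⊥ (π₂)_*ν`. -/
theorem sat_rigidity_of_equivariant_maps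
    {Γ B C : Type*} [Group Γ] [Countable Γ]
    [MeasurableSpace B] [StandardBorelSpace B]
    [MeasurableSpace C] [StandardBorelSpace C]
    [MulAction Γ B] [MulAction Γ C]
    (hmB : ∀ γ : Γ, Measurable (fun b : B => γ • b))
    (hmC : ∀ γ : Γ, Measurable (fun c : C => γ • c))
    (ν : Measure B) [IsProbabilityMeasure ν]
    (hqi : ∀ γ : Γ, ν.map (fun b => γ • b) ≪ ν ∧ ν ≪ ν.map (fun b => γ • b))
    (hSAT : ∀ A : Set B, MeasurableSet A → 0 < ν A →
      ∃ γ : ℕ → Γ, Tendsto (fun n => ν ((fun b => γ n • b) ⁻¹' A)) atTop (nhds 1))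
    (π₁ π₂ : B → C) (h₁ : Measurable π₁) (h₂ : Measurable π₂)
    (heq₁ : ∀ γ : Γ, ∀ᵐ b ∂ν, π₁ (γ • b) = γ • π₁ b)
    (heq₂ : ∀ γ : Γ, ∀ᵐ b ∂ν, π₂ (γ • b) = γ • π₂ b) :
    (∀ᵐ b ∂ν, π₁ b = π₂ b) ∨
      Measure.MutuallySingular (ν.map π₁) (ν.map π₂) :=
  sat_rigidity_of_equivariant_maps_general hmC ν hSAT π₁ π₂ h₁ h₂ heq₁ heq₂
end

section
/- In the SAT lemma, if the sequence γₙ can be chosen so that Σₙ ν(γₙ⁻¹(B∖A)) < ∞ for a positive-measure set A on which π₁ ≠ π₂ (with disjoint images F₁ = π₁(A), F₂ = π₂(A)), then for ν-a.e. x ∈ B one has γₙx ∈ A for all sufficiently large n, and consequently (π₁)_*ν is supported on liminf γₙ⁻¹F₁ while (π₂)_*ν is supported on liminf γₙ⁻¹F₂, which are disjoint. -/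
open MeasureTheory Filter

/-- Borel–Cantelli step of the SAT lemma: if `A` is a positive measure
set on which `π₁` and `π₂` have disjoint images `F₁ = π₁(A)`, `F₂ = π₂(A)`, and
`Σₙ ν(γₙ⁻¹(B∖A)) < ∞`, then for `ν`-a.e. `x` one has `γₙ • x ∈ A` for all large `n`;
consequently `(π₁)_*ν` is carried by `liminf γₙ⁻¹ F₁` and `(π₂)_*ν` by
`liminf γₙ⁻¹ F₂`, and these two sets are disjoint. -/
theorem sat_borel_cantelli_step
    {Γ B C : Type*} [Group Γ] [Countable Γ]
    [MeasurableSpace B] [StandardBorelSpace B]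
    [MeasurableSpace C] [StandardBorelSpace C]
    [MulAction Γ B] [MulAction Γ C]
    (hmB : ∀ γ : Γ, Measurable (fun b : B => γ • b))
    (hmC : ∀ γ : Γ, Measurable (fun c : C => γ • c))
    (ν : Measure B) [IsProbabilityMeasure ν]
    (π₁ π₂ : B → C) (h₁ : Measurable π₁) (h₂ : Measurable π₂)
    (heq₁ : ∀ γ : Γ, ∀ᵐ b ∂ν, π₁ (γ • b) = γ • π₁ b)
    (heq₂ : ∀ γ : Γ, ∀ᵐ b ∂ν, π₂ (γ • b) = γ • π₂ b)
    (A : Set B) (hA : MeasurableSet A) (hApos : 0 < ν A)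
    (hdisj : Disjoint (π₁ '' A) (π₂ '' A))
    (γ : ℕ → Γ)
    (hsum : ∑' n, ν ((fun b => γ n • b) ⁻¹' Aᶜ) ≠ ⊤) :
    (∀ᵐ b ∂ν, ∀ᶠ n in atTop, γ n • b ∈ A) ∧
    (∀ᵐ b ∂ν, π₁ b ∈ ⋃ N, ⋂ n, ⋂ (_ : N ≤ n), (fun c => γ n • c) ⁻¹' (π₁ '' A)) ∧
    (∀ᵐ b ∂ν, π₂ b ∈ ⋃ N, ⋂ n, ⋂ (_ : N ≤ n), (fun c => γ n • c) ⁻¹' (π₂ '' A)) ∧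
    Disjoint (⋃ N, ⋂ n, ⋂ (_ : N ≤ n), (fun c => γ n • c) ⁻¹' (π₁ '' A))
             (⋃ N, ⋂ n, ⋂ (_ : N ≤ n), (fun c => γ n • c) ⁻¹' (π₂ '' A)) := by
  -- Borel–Cantelli
  have hbc : ∀ᵐ b ∂ν, ∀ᶠ n in atTop, γ n • b ∈ A := by
    have h := MeasureTheory.ae_eventually_notMem (μ := ν)
      (s := fun n => (fun b => γ n • b) ⁻¹' Aᶜ) hsum
    filter_upwards [h] with b hb
    filter_upwards [hb] with n hn
    simpa using hn
  -- a.e. equivariance for all n simultaneously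
  have heq₁' : ∀ᵐ b ∂ν, ∀ n : ℕ, π₁ (γ n • b) = γ n • π₁ b :=
    ae_all_iff.2 fun n => heq₁ (γ n)
  have heq₂' : ∀ᵐ b ∂ν, ∀ n : ℕ, π₂ (γ n • b) = γ n • π₂ b :=
    ae_all_iff.2 fun n => heq₂ (γ n)
  refine ⟨hbc, ?_, ?_, ?_⟩
  · filter_upwards [hbc, heq₁'] with b hb he
    obtain ⟨N, hN⟩ := eventually_atTop.1 hb
    refine Set.mem_iUnion.2 ⟨N, ?_⟩
    simp only [Set.mem_iInter, Set.mem_preimage]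
    intro n hn
    rw [← he n]
    exact Set.mem_image_of_mem _ (hN n hn)
  · filter_upwards [hbc, heq₂'] with b hb he
    obtain ⟨N, hN⟩ := eventually_atTop.1 hb
    refine Set.mem_iUnion.2 ⟨N, ?_⟩
    simp only [Set.mem_iInter, Set.mem_preimage]
    intro n hn
    rw [← he n]
    exact Set.mem_image_of_mem _ (hN n hn)
  · rw [Set.disjoint_left]
    intro c hc₁ hc₂
    obtain ⟨N₁, h₁'⟩ := Set.mem_iUnion.1 hc₁
    obtain ⟨N₂, h₂'⟩ := Set.mem_iUnion.1 hc₂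
    simp only [Set.mem_iInter, Set.mem_preimage] at h₁' h₂'
    exact Set.disjoint_left.1 hdisj
      (h₁' (max N₁ N₂) (le_max_left _ _)) (h₂' (max N₁ N₂) (le_max_right _ _))
end
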